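/- Let p ≥ 1, d ≥ 1, K ≥ 2, and let μ_1, μ_2, …, μ_K be probability measures on ℝ^d with finite p-th moments. Set g_{μ_1}(θ) := max_{2≤k≤K} W_p^p(θ♯μ_1, θ♯μ_k), assumed measurable with the relevant integrands σ-integrable on S^{d−1}. Then ESMW_p^p(μ_1, μ_2, …, μ_K; c) ≥ ESF(μ_1; μ_{2:K}): for every fixed μ_1, the energy-based sliced multi-marginal Wasserstein cost with the maximal ground metric is at least the es-MFSWB objective. -/

import Mathlib

/-!
Every multi-marginal coupling of `μ₁, …, μ_K` pushes forward, through the projections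
`x ↦ (⟪θ, x₁⟫, ⟪θ, x_k⟫)`, to a coupling of `θ♯μ₁` and `θ♯μ_k`, and the maximal ground metric
dominates `|⟪θ, x₁⟫ - ⟪θ, x_k⟫|`. Hence `W_p^p(θ♯μ₁, θ♯μ_k)` is at most the inner multi-marginal
cost along `θ` for every `k`, so `g θ` is too; multiplying by the positive weight `exp (g θ)`,
integrating over the sphere and normalising gives the inequality. The finite `p`-th moments make
the maximal cost integrable under every coupling, which is what the comparison of integrals needs.
-/

open MeasureTheory Metric Real

noncomputable section

/-- `ℝ^d`. -/
abbrev Rd (d : ℕ) := EuclideanSpace ℝ (Fin d)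

/-- The uniform probability measure `σ` on the unit sphere `S^{d-1} ⊂ ℝ^d`,
obtained by normalizing the surface measure coming from the Lebesgue measure. -/
noncomputable def uniformSphere (d : ℕ) :
    Measure (sphere (0 : Rd d) 1) :=
  ((volume : Measure (Rd d)).toSphere Set.univ)⁻¹ • (volume : Measure (Rd d)).toSphere

/-- A measure on `ℝ^d` has finite `p`-th moment. -/
def FiniteMoment {d : ℕ} (p : ℝ) (μ : Measure (Rd d)) : Prop :=
  Integrable (fun x => ‖x‖ ^ p) μ

/-- A measure on `ℝ` has finite `p`-th moment. -/
def FiniteMoment1 (p : ℝ) (ν : Measure ℝ) : Prop :=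
  Integrable (fun x => |x| ^ p) ν

/-- Pushforward `θ♯μ` of `μ` under `x ↦ ⟪θ, x⟫`. -/
def proj {d : ℕ} (θ : sphere (0 : Rd d) 1) (μ : Measure (Rd d)) : Measure ℝ :=
  μ.map (fun x => inner ℝ (θ : Rd d) x)

/-- The set of couplings of two measures on `ℝ`. -/
def Coupling (ν₁ ν₂ : Measure ℝ) : Set (Measure (ℝ × ℝ)) :=
  {γ | IsProbabilityMeasure γ ∧ γ.map Prod.fst = ν₁ ∧ γ.map Prod.snd = ν₂}

/-- One-dimensional `p`-Wasserstein cost `W_p^p`. -/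
def Wpp (p : ℝ) (ν₁ ν₂ : Measure ℝ) : ℝ :=
  sInf ((fun γ : Measure (ℝ × ℝ) => ∫ q, |q.1 - q.2| ^ p ∂γ) '' Coupling ν₁ ν₂)

/-- Sliced `p`-Wasserstein cost `SW_p^p`. -/
def SWpp {d : ℕ} (p : ℝ) (μ₁ μ₂ : Measure (Rd d)) : ℝ :=
  ∫ θ, Wpp p (proj θ μ₁) (proj θ μ₂) ∂(uniformSphere d)

/-- The set of multi-marginal couplings of `K` measures on `ℝ^d`. -/
def MCoupling {d K : ℕ} (μs : Fin K → Measure (Rd d)) : Set (Measure (Fin K → Rd d)) :=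
  {pl | IsProbabilityMeasure pl ∧ ∀ k, pl.map (fun x => x k) = μs k}

/-- The inner multi-marginal transport cost along direction `θ`, with the maximal
ground metric `c(t₁,…,t_K) = max_{i,j} |t_i - t_j|`. -/
def SMWtheta {d K : ℕ} (p : ℝ) (μs : Fin K → Measure (Rd d))
    (θ : sphere (0 : Rd d) 1) : ℝ :=
  sInf ((fun pl : Measure (Fin K → Rd d) =>
      ∫ x, (⨆ i, ⨆ j, |inner ℝ (θ : Rd d) (x i) - inner ℝ (θ : Rd d) (x j)|) ^ p ∂pl)
    '' MCoupling μs)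

/-- Sliced multi-marginal Wasserstein cost `SMW_p^p` with the maximal ground metric. -/
def SMWpp {d K : ℕ} (p : ℝ) (μs : Fin K → Measure (Rd d)) : ℝ :=
  ∫ θ, SMWtheta p μs θ ∂(uniformSphere d)

open scoped RealInnerProductSpace

section Spread

variable {ι : Type*}

lemma iSup_iSup_abs_sub_nonneg (t : ι → ℝ) : 0 ≤ ⨆ i, ⨆ j, |t i - t j| :=
  Real.iSup_nonneg fun _ => Real.iSup_nonneg fun _ => abs_nonneg _

variable [Fintype ι]

lemma abs_sub_le_iSup_iSup_abs_sub (t : ι → ℝ) (i j : ι) :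
    |t i - t j| ≤ ⨆ i, ⨆ j, |t i - t j| :=
  (le_ciSup (Set.finite_range _).bddAbove j).trans
    (le_ciSup (f := fun i => ⨆ j, |t i - t j|) (Set.finite_range _).bddAbove i)

lemma iSup_iSup_abs_sub_rpow_le [Nonempty ι] {p : ℝ} (hp : 0 ≤ p) (t : ι → ℝ) :
    (⨆ i, ⨆ j, |t i - t j|) ^ p ≤ 2 ^ p * ∑ l, |t l| ^ p := by
  obtain ⟨m, hm⟩ := Finite.exists_max fun l => |t l|
  have hspread : ⨆ i, ⨆ j, |t i - t j| ≤ 2 * |t m| :=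
    ciSup_le fun i => ciSup_le fun j => by linarith [abs_sub (t i) (t j), hm i, hm j]
  calc (⨆ i, ⨆ j, |t i - t j|) ^ p ≤ (2 * |t m|) ^ p :=
        rpow_le_rpow (iSup_iSup_abs_sub_nonneg t) hspread hp
    _ = 2 ^ p * |t m| ^ p := mul_rpow zero_le_two (abs_nonneg _)
    _ ≤ 2 ^ p * ∑ l, |t l| ^ p := by
        gcongr
        exact Finset.single_le_sum (fun l _ => rpow_nonneg (abs_nonneg _) p) (Finset.mem_univ m)

end Spread

lemma abs_inner_le_norm_of_mem_sphere {E : Type*} [NormedAddCommGroup E] [InnerProductSpace ℝ E]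
    (θ : sphere (0 : E) 1) (y : E) : |⟪(θ : E), y⟫| ≤ ‖y‖ := by
  simpa [norm_eq_of_mem_sphere θ] using abs_real_inner_le_norm (θ : E) y

lemma Wpp_le_integral {p : ℝ} {ν₁ ν₂ : Measure ℝ} {γ : Measure (ℝ × ℝ)}
    (hγ : γ ∈ Coupling ν₁ ν₂) : Wpp p ν₁ ν₂ ≤ ∫ q, |q.1 - q.2| ^ p ∂γ :=
  csInf_le ⟨0, by
    rintro _ ⟨γ', -, rfl⟩
    exact integral_nonneg fun q => rpow_nonneg (abs_nonneg _) p⟩ ⟨γ, hγ, rfl⟩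

lemma Wpp_nonneg (p : ℝ) (ν₁ ν₂ : Measure ℝ) : 0 ≤ Wpp p ν₁ ν₂ :=
  Real.sInf_nonneg <| by
    rintro _ ⟨γ, -, rfl⟩
    exact integral_nonneg fun q => rpow_nonneg (abs_nonneg _) p

section MultiMarginal

variable {d K : ℕ} {μs : Fin K → Measure (Rd d)}

lemma SMWtheta_nonneg (p : ℝ) (μs : Fin K → Measure (Rd d)) (θ : sphere (0 : Rd d) 1) :
    0 ≤ SMWtheta p μs θ :=
  Real.sInf_nonneg <| by
    rintro _ ⟨pl, -, rfl⟩
    exact integral_nonneg fun x => rpow_nonneg (iSup_iSup_abs_sub_nonneg _) p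

lemma pi_mem_MCoupling (μs : Fin K → Measure (Rd d)) [∀ k, IsProbabilityMeasure (μs k)] :
    Measure.pi μs ∈ MCoupling μs :=
  ⟨inferInstance, fun k => (measurePreserving_eval μs k).map_eq⟩

lemma map_inner_eval_mem_Coupling (θ : sphere (0 : Rd d) 1) {pl : Measure (Fin K → Rd d)}
    (hpl : pl ∈ MCoupling μs) (i j : Fin K) :
    pl.map (fun x => (⟪(θ : Rd d), x i⟫, ⟪(θ : Rd d), x j⟫)) ∈
      Coupling (proj θ (μs i)) (proj θ (μs j)) := by
  have := hpl.1
  have hθ : Measurable fun y : Rd d => ⟪(θ : Rd d), y⟫ := by fun_prop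
  refine ⟨Measure.isProbabilityMeasure_map (by fun_prop), ?_, ?_⟩
  · rw [Measure.map_map measurable_fst (by fun_prop), ← hpl.2 i, proj,
      Measure.map_map hθ (measurable_pi_apply i)]
    rfl
  · rw [Measure.map_map measurable_snd (by fun_prop), ← hpl.2 j, proj,
      Measure.map_map hθ (measurable_pi_apply j)]
    rfl

lemma integrable_norm_eval_rpow {p : ℝ} {pl : Measure (Fin K → Rd d)}
    (hpl : pl ∈ MCoupling μs) {k : Fin K} (hk : FiniteMoment p (μs k)) :
    Integrable (fun x : Fin K → Rd d => ‖x k‖ ^ p) pl :=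
  (MeasurePreserving.integrable_comp (g := fun y : Rd d => ‖y‖ ^ p)
    ⟨measurable_pi_apply k, hpl.2 k⟩ (measurable_norm.pow_const p).aestronglyMeasurable).2 hk

lemma integrable_iSup_iSup_abs_sub_inner_rpow [NeZero K] {p : ℝ} (hp : 0 ≤ p)
    (hμs : ∀ k, FiniteMoment p (μs k)) (θ : sphere (0 : Rd d) 1)
    {pl : Measure (Fin K → Rd d)} (hpl : pl ∈ MCoupling μs) :
    Integrable (fun x : Fin K → Rd d =>
      (⨆ i, ⨆ j, |⟪(θ : Rd d), x i⟫ - ⟪(θ : Rd d), x j⟫|) ^ p) pl := by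
  refine Integrable.mono'
    ((integrable_finsetSum Finset.univ (f := fun l x => ‖x l‖ ^ p)
      fun l _ => integrable_norm_eval_rpow hpl (hμs l)).const_mul (2 ^ p))
    ?_ (.of_forall fun x => ?_)
  · exact Measurable.aestronglyMeasurable (by measurability)
  · rw [norm_of_nonneg (rpow_nonneg (iSup_iSup_abs_sub_nonneg _) _)]
    refine (iSup_iSup_abs_sub_rpow_le hp _).trans ?_
    gcongr with l
    exact abs_inner_le_norm_of_mem_sphere θ (x l)

theorem Wpp_proj_le_SMWtheta [NeZero K] [∀ k, IsProbabilityMeasure (μs k)] {p : ℝ} (hp : 0 ≤ p)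
    (hμs : ∀ k, FiniteMoment p (μs k)) (θ : sphere (0 : Rd d) 1) (i j : Fin K) :
    Wpp p (proj θ (μs i)) (proj θ (μs j)) ≤ SMWtheta p μs θ := by
  refine le_csInf ⟨_, _, pi_mem_MCoupling μs, rfl⟩ ?_
  rintro _ ⟨pl, hpl, rfl⟩
  calc Wpp p (proj θ (μs i)) (proj θ (μs j))
      ≤ ∫ q, |q.1 - q.2| ^ p ∂(pl.map fun x => (⟪(θ : Rd d), x i⟫, ⟪(θ : Rd d), x j⟫)) :=
        Wpp_le_integral (map_inner_eval_mem_Coupling θ hpl i j)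
    _ = ∫ x, |⟪(θ : Rd d), x i⟫ - ⟪(θ : Rd d), x j⟫| ^ p ∂pl :=
        integral_map (by fun_prop) (by fun_prop)
    _ ≤ ∫ x, (⨆ i, ⨆ j, |⟪(θ : Rd d), x i⟫ - ⟪(θ : Rd d), x j⟫|) ^ p ∂pl :=
        integral_mono_of_nonneg (.of_forall fun _ => rpow_nonneg (abs_nonneg _) p)
          (integrable_iSup_iSup_abs_sub_inner_rpow hp hμs θ hpl)
          (.of_forall fun x => rpow_le_rpow (abs_nonneg _)
            (abs_sub_le_iSup_iSup_abs_sub (fun l => ⟪(θ : Rd d), x l⟫) i j) hp)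

end MultiMarginal

/-- `μs` lists `μ_2, …, μ_{K+1}`, so the informal `K` is `K + 1` here. -/
theorem esmw_ge_esf_general (p : ℝ) (hp : 1 ≤ p) (d : ℕ)
    (K : ℕ) (μ₁ : Measure (Rd d)) (μs : Fin K → Measure (Rd d))
    (hμ₁ : IsProbabilityMeasure μ₁) (hμ₁m : FiniteMoment p μ₁)
    (hμs : ∀ k, IsProbabilityMeasure (μs k)) (hμsm : ∀ k, FiniteMoment p (μs k))
    (g : sphere (0 : Rd d) 1 → ℝ)
    (hg : g = fun θ => ⨆ k, Wpp p (proj θ μ₁) (proj θ (μs k)))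
    (hsmwint : Integrable
      (fun θ => SMWtheta p (Fin.cons μ₁ μs) θ * Real.exp (g θ)) (uniformSphere d)) :
    (∫ θ, g θ * Real.exp (g θ) ∂(uniformSphere d)) /
        (∫ θ, Real.exp (g θ) ∂(uniformSphere d)) ≤
      (∫ θ, SMWtheta p (Fin.cons μ₁ μs) θ * Real.exp (g θ) ∂(uniformSphere d)) /
        (∫ θ, Real.exp (g θ) ∂(uniformSphere d)) := by
  have : ∀ k, IsProbabilityMeasure ((Fin.cons μ₁ μs : Fin (K + 1) → Measure (Rd d)) k) :=
    Fin.cases hμ₁ hμs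
  have hmom : ∀ k, FiniteMoment p ((Fin.cons μ₁ μs : Fin (K + 1) → Measure (Rd d)) k) :=
    Fin.cases hμ₁m hμsm
  have hg_nonneg (θ) : 0 ≤ g θ := hg ▸ Real.iSup_nonneg fun _ => Wpp_nonneg _ _ _
  have hg_le (θ) : g θ ≤ SMWtheta p (Fin.cons μ₁ μs) θ := hg ▸
    Real.iSup_le (fun k => Wpp_proj_le_SMWtheta (zero_le_one.trans hp) hmom θ 0 k.succ)
      (SMWtheta_nonneg p _ θ)
  refine div_le_div_of_nonneg_right ?_ (integral_nonneg fun θ => (exp_pos _).le)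
  exact integral_mono_of_nonneg (.of_forall fun θ => mul_nonneg (hg_nonneg θ) (exp_pos _).le)
    hsmwint (.of_forall fun θ => mul_le_mul_of_nonneg_right (hg_le θ) (exp_pos _).le)

/-- For every fixed `μ₁`, the energy-based sliced multi-marginal Wasserstein cost
with the maximal ground metric dominates the es-MFSWB objective:
`ESMW_p^p(μ₁, μ_2, …, μ_{K+1}; c) ≥ ESF(μ₁; μ_{2:K+1})`, where
`g θ = max_k W_p^p(θ♯μ₁, θ♯μ_k)` and the slicing density is proportional to
`exp (g θ)`. Here `μs : Fin K → Measure (Rd d)` lists `μ_2, …, μ_{K+1}` (`K ≥ 1`). -/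
theorem esmw_ge_esf (p : ℝ) (hp : 1 ≤ p) (d : ℕ) (hd : 1 ≤ d)
    (K : ℕ) (hK : 1 ≤ K) (μ₁ : Measure (Rd d)) (μs : Fin K → Measure (Rd d))
    (hμ₁ : IsProbabilityMeasure μ₁) (hμ₁m : FiniteMoment p μ₁)
    (hμs : ∀ k, IsProbabilityMeasure (μs k)) (hμsm : ∀ k, FiniteMoment p (μs k))
    (g : sphere (0 : Rd d) 1 → ℝ)
    (hg : g = fun θ => ⨆ k, Wpp p (proj θ μ₁) (proj θ (μs k)))
    (hgmeas : Measurable g) (hgint : Integrable g (uniformSphere d))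
    (hgeint : Integrable (fun θ => g θ * Real.exp (g θ)) (uniformSphere d))
    (hsmwint : Integrable
      (fun θ => SMWtheta p (Fin.cons μ₁ μs) θ * Real.exp (g θ)) (uniformSphere d)) :
    (∫ θ, g θ * Real.exp (g θ) ∂(uniformSphere d)) /
        (∫ θ, Real.exp (g θ) ∂(uniformSphere d)) ≤
      (∫ θ, SMWtheta p (Fin.cons μ₁ μs) θ * Real.exp (g θ) ∂(uniformSphere d)) /
        (∫ θ, Real.exp (g θ) ∂(uniformSphere d)) :=
  esmw_ge_esf_general p hp d K μ₁ μs hμ₁ hμ₁m hμs hμsm g hg hsmwint
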